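/- Given m > 0, set t = ⌈m/3⌉. Let S*_m be a set of words of length m over D such that for any (not necessarily distinct) x1, x2 ∈ S*_m, there is no contiguous subsequence y of x1 of length t and contiguous subsequence z of x2 of length t with y = RC(z). Then for n = mk, every word of length n formed by concatenating k blocks from S*_m is m-SSA. -/

import Mathlib

/-!
Suppose the factors `y` at `i` and `z` at `j` of length `ℓ ≥ m` satisfy `y = RC z`, and let
`t = ⌈m/3⌉`. For every offset `d ≤ ℓ - t`, the length-`t` factor of `y` at offset `d` is the reverse
complement of the length-`t` factor of `z` at offset `ℓ - t - d`. As `d` runs over the `m - t + 1`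
offsets `0, …, m - t`, each of these two windows straddles a block boundary for at most `t - 1` values
of `d`, and `2 (t - 1) < m - t + 1` because `3 t ≤ m + 2`. Hence some `d` puts both windows inside
single blocks, where the hypothesis on `S` forbids them to be reverse complements.
-/

inductive Base : Type
  | A | T | C | G
deriving DecidableEq, Repr

open Base

def bcompl : Base → Base
  | A => T
  | T => A
  | C => G
  | G => C

/-- Reverse-complement of a DNA word. -/
def RC (w : List Base) : List Base := w.reverse.map bcompl

/-- The contiguous factor of `x` starting at index `i` of length `k`. -/
def factor (x : List Base) (i k : ℕ) : List Base := (x.drop i).take k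

/-- `x` is `m`-SSA: for all `k ≥ m` there is no pair of non-overlapping
contiguous factors of length `k`, one the reverse-complement of the other. -/
def SSA (m : ℕ) (x : List Base) : Prop :=
  ∀ k, m ≤ k → ∀ i j, i + k ≤ x.length → j + k ≤ x.length →
    (i + k ≤ j ∨ j + k ≤ i) → factor x i k ≠ RC (factor x j k)

open Finset

lemma factor_length {x : List Base} {i ℓ : ℕ} (h : i + ℓ ≤ x.length) :
    (factor x i ℓ).length = ℓ := by
  simp only [factor, List.length_take, List.length_drop]
  omega

lemma factor_factor (x : List Base) (i : ℕ) {ℓ d t : ℕ} (h : d + t ≤ ℓ) :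
    factor (factor x i ℓ) d t = factor x (i + d) t := by
  simp only [factor, List.drop_take, List.take_take, List.drop_drop]
  congr 1
  omega

lemma factor_RC {w : List Base} {d t : ℕ} (h : d + t ≤ w.length) :
    factor (RC w) d t = RC (factor w (w.length - t - d) t) := by
  simp only [factor, RC, ← List.map_drop, ← List.map_take]
  congr 1
  rw [List.reverse_take, List.reverse_drop, List.length_drop, List.drop_take]
  congr 1
  · omega
  · congr 1; omega

lemma factor_eq_RC_factor_of_factor_eq_RC {x : List Base} {i j ℓ : ℕ} (hj : j + ℓ ≤ x.length)
    (h : factor x i ℓ = RC (factor x j ℓ)) {d t : ℕ} (hdt : d + t ≤ ℓ) :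
    factor x (i + d) t = RC (factor x (j + (ℓ - t - d)) t) := by
  have hlen := factor_length hj
  rw [← factor_factor x i hdt, h, factor_RC (by omega), hlen, factor_factor x j (by omega)]

lemma factor_append_of_add_le_length {b : List Base} {p t : ℕ} (c : List Base)
    (h : p + t ≤ b.length) : factor (b ++ c) p t = factor b p t := by
  rw [factor, List.drop_append_of_le_length (by omega),
    List.take_append_of_le_length (by simp only [List.length_drop]; omega), factor]

lemma factor_append_of_length_le {b : List Base} {p : ℕ} (c : List Base) (t : ℕ)
    (h : b.length ≤ p) : factor (b ++ c) p t = factor c (p - b.length) t := by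
  rw [factor, List.drop_append, List.drop_eq_nil_of_le h, List.nil_append, factor]

lemma exists_mem_factor_flatten_eq {m t : ℕ} (ht : 0 < t) {bs : List (List Base)}
    (hbs : ∀ b ∈ bs, b.length = m) {p : ℕ} (hp : p % m + t ≤ m)
    (hpt : p + t ≤ bs.flatten.length) :
    ∃ b ∈ bs, factor bs.flatten p t = factor b (p % m) t := by
  induction bs generalizing p with
  | nil => simp only [List.flatten_nil, List.length_nil] at hpt; omega
  | cons b bs ih =>
    have hb : b.length = m := hbs b List.mem_cons_self
    rw [List.flatten_cons] at hpt ⊢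
    rcases Nat.lt_or_ge p m with hpm | hpm
    · rw [Nat.mod_eq_of_lt hpm] at hp ⊢
      exact ⟨b, List.mem_cons_self, factor_append_of_add_le_length _ (by omega)⟩
    · rw [Nat.mod_eq_sub_mod hpm] at hp ⊢
      obtain ⟨b', hb', h⟩ := ih (fun c hc => hbs c (List.mem_cons_of_mem _ hc)) hp
        (by simp only [List.length_append] at hpt; omega)
      refine ⟨b', List.mem_cons_of_mem _ hb', ?_⟩
      rw [factor_append_of_length_le _ _ (by omega), hb, h]

lemma card_filter_lt_mod_add_le {m n : ℕ} (t : ℕ) (f : ℕ → ℕ) (hn : n ≤ m)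
    (hf : ∀ d₁ < n, ∀ d₂ < n, f d₁ ≡ f d₂ [MOD m] → d₁ = d₂) :
    #{d ∈ range n | m < f d % m + t} ≤ t - 1 := by
  calc #{d ∈ range n | m < f d % m + t}
      ≤ #(Ico (m + 1 - t) m) := by
        refine card_le_card_of_injOn (fun d => f d % m) (fun d hd => ?_) (fun d₁ hd₁ d₂ hd₂ h => ?_)
        · simp only [coe_filter, mem_range, Set.mem_ofPred_eq] at hd
          have := Nat.mod_lt (f d) (show 0 < m by omega)
          simp only [coe_Ico, Set.mem_Ico]
          omega
        · simp only [coe_filter, mem_range, Set.mem_ofPred_eq] at hd₁ hd₂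
          exact hf d₁ hd₁.1 d₂ hd₂.1 h
    _ ≤ t - 1 := by simp only [Nat.card_Ico]; omega

lemma exists_offset_mod_add_le {m t ℓ : ℕ} (ht₀ : 0 < t) (ht : 3 * t ≤ m + 2) (hℓ : m ≤ ℓ)
    (i j : ℕ) : ∃ d, d + t ≤ m ∧ (i + d) % m + t ≤ m ∧ (j + (ℓ - t - d)) % m + t ≤ m := by
  have hn : m - t + 1 ≤ m := by omega
  have hbad₁ := card_filter_lt_mod_add_le t (fun d => i + d) hn
    fun d₁ h₁ d₂ h₂ h => Nat.ModEq.eq_of_lt_of_lt (h.add_left_cancel' i) (by omega) (by omega)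
  have hbad₂ := card_filter_lt_mod_add_le t (fun d => j + (ℓ - t - d)) hn
    fun d₁ h₁ d₂ h₂ h => by
      have h' := (h.add_left_cancel' j).add_right (d₁ + d₂)
      rw [show ℓ - t - d₁ + (d₁ + d₂) = ℓ - t + d₂ by omega,
        show ℓ - t - d₂ + (d₁ + d₂) = ℓ - t + d₁ by omega] at h'
      exact (Nat.ModEq.eq_of_lt_of_lt (h'.add_left_cancel' _) (by omega) (by omega)).symm
  obtain ⟨d, hd, hgood⟩ := exists_mem_notMem_of_card_lt_card
    ((card_union_le _ _).trans_lt ((add_le_add hbad₁ hbad₂).trans_lt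
      (show t - 1 + (t - 1) < #(range (m - t + 1)) by rw [card_range]; omega)))
  simp only [mem_union, mem_filter, mem_range, not_or, not_and, not_lt] at hd hgood
  exact ⟨d, by omega, hgood.1 hd, hgood.2 hd⟩

theorem stmt7_general (m : ℕ) (hm : 0 < m) (S : Set (List Base))
    (hlen : ∀ w ∈ S, w.length = m)
    (hS : ∀ x1 ∈ S, ∀ x2 ∈ S, ∀ i j,
      i + (m + 2) / 3 ≤ m → j + (m + 2) / 3 ≤ m →
      factor x1 i ((m + 2) / 3) ≠ RC (factor x2 j ((m + 2) / 3)))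
    (bs : List (List Base))
    (hbs : ∀ b ∈ bs, b ∈ S) :
    SSA m bs.flatten := by
  intro ℓ hℓ i j _ hj _ heq
  set t := (m + 2) / 3 with ht
  obtain ⟨d, hdt, hi', hj'⟩ := exists_offset_mod_add_le (by omega) (by omega : 3 * t ≤ m + 2) hℓ i j
  have hblocks : ∀ b ∈ bs, b.length = m := fun b hb => hlen b (hbs b hb)
  obtain ⟨b₁, hb₁, h₁⟩ := exists_mem_factor_flatten_eq (by omega) hblocks hi' (by omega)
  obtain ⟨b₂, hb₂, h₂⟩ := exists_mem_factor_flatten_eq (by omega) hblocks hj' (by omega)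
  refine hS b₁ (hbs b₁ hb₁) b₂ (hbs b₂ hb₂) _ _ hi' hj' ?_
  rw [← h₁, ← h₂]
  exact factor_eq_RC_factor_of_factor_eq_RC hj heq (by omega)

theorem stmt7 (m : ℕ) (hm : 0 < m) (S : Set (List Base))
    (hlen : ∀ w ∈ S, w.length = m)
    (hS : ∀ x1 ∈ S, ∀ x2 ∈ S, ∀ i j,
      i + (m + 2) / 3 ≤ m → j + (m + 2) / 3 ≤ m →
      factor x1 i ((m + 2) / 3) ≠ RC (factor x2 j ((m + 2) / 3)))
    (k : ℕ) (bs : List (List Base)) (hk : bs.length = k)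
    (hbs : ∀ b ∈ bs, b ∈ S) :
    SSA m bs.flatten :=
  stmt7_general m hm S hlen hS bs hbs
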